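/- arXiv:2407.03989 — 4 statements merged into one kernel-verified Lean document; each statement's English description precedes it below -/
import Mathlib

section
/- Let a > 0 and let H : [0, ∞) → ℝ be differentiable with H(0) < -a and H'(s) ≤ a² - H(s)² for all s ≥ 0. Then H(s) < -a for all s ≥ 0, and moreover no such H exists; i.e., the hypotheses lead to a contradiction. -/
/-!
While `H < -a` the bound `H' ≤ a² - H²` makes `H` decrease, so `H` can never climb back to `-a`.
Then `G = 1 / (H + a)` is negative, and `H' ≤ a² - H² = (a - H)(a + H)` gives
`G' = -H' / (H + a)² ≥ (H - a) / (H + a) ≥ 1`, so `G(s) ≥ G(0) + s` eventually becomes positive.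
-/

open Set

theorem lt_of_deriv_nonpos_of_lt {f : ℝ → ℝ} {t₀ c : ℝ}
    (hf : ∀ x, t₀ ≤ x → DifferentiableAt ℝ f x) (h₀ : f t₀ < c)
    (hderiv : ∀ x, t₀ ≤ x → f x < c → deriv f x ≤ 0) :
    ∀ x, t₀ ≤ x → f x < c := by
  by_contra! hexists
  obtain ⟨x₁, hx₁, hcx₁⟩ := hexists
  have hcont : ContinuousOn f (Ici t₀) := fun x hx =>
    (hf x hx).continuousAt.continuousWithinAt
  have hclosed : IsClosed (Ici t₀ ∩ f ⁻¹' Ici c) :=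
    hcont.preimage_isClosed_of_isClosed isClosed_Ici isClosed_Ici
  obtain ⟨⟨htb, hcb⟩, hleast⟩ :=
    hclosed.isLeast_csInf ⟨x₁, hx₁, hcx₁⟩ ⟨t₀, fun x hx => hx.1⟩
  set b := sInf (Ici t₀ ∩ f ⁻¹' Ici c)
  have hbefore : ∀ x ∈ Ioo t₀ b, f x < c := fun x hx =>
    lt_of_not_ge fun hcx => (hleast ⟨hx.1.le, hcx⟩).not_gt hx.2
  have hanti : AntitoneOn f (Icc t₀ b) := by
    refine antitoneOn_of_deriv_nonpos (convex_Icc t₀ b) (hcont.mono Icc_subset_Ici_self)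
      (fun x hx => ?_) (fun x hx => ?_) <;> rw [interior_Icc] at hx
    · exact (hf x hx.1.le).differentiableWithinAt
    · exact hderiv x hx.1.le (hbefore x hx)
  have hfb : f b ≤ f t₀ := hanti ⟨le_rfl, htb⟩ ⟨htb, le_rfl⟩ htb
  exact absurd (hcb.trans hfb) (not_le.mpr h₀)

theorem one_le_neg_div_sq_of_le_sq_sub_sq {a h d : ℝ} (ha : 0 ≤ a) (hh : h + a < 0)
    (hd : d ≤ a ^ 2 - h ^ 2) : 1 ≤ -d / (h + a) ^ 2 := by
  rw [le_div_iff₀ (sq_pos_of_neg hh)]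
  nlinarith

theorem false_of_riccati_of_lt {a t₀ : ℝ} {H : ℝ → ℝ} (ha : 0 ≤ a)
    (hdiff : ∀ s, t₀ ≤ s → DifferentiableAt ℝ H s)
    (hbelow : ∀ s, t₀ ≤ s → H s < -a)
    (hder : ∀ s, t₀ ≤ s → deriv H s ≤ a ^ 2 - H s ^ 2) : False := by
  have hneg : ∀ s, t₀ ≤ s → H s + a < 0 := fun s hs => by linarith [hbelow s hs]
  set G : ℝ → ℝ := fun s => (H s + a)⁻¹
  have hG : ∀ s, t₀ ≤ s → HasDerivAt G (-deriv H s / (H s + a) ^ 2) s := fun s hs =>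
    ((hdiff s hs).hasDerivAt.add_const a).inv (hneg s hs).ne
  have hgrowth := (convex_Ici t₀).mul_sub_le_image_sub_of_le_deriv (C := 1)
    (fun s hs => (hG s hs).continuousAt.continuousWithinAt)
    (fun s hs => (hG s (interior_subset hs)).differentiableAt.differentiableWithinAt)
    (fun s hs => (hG s (interior_subset hs)).deriv ▸
      one_le_neg_div_sq_of_le_sq_sub_sq ha (hneg s (interior_subset hs))
        (hder s (interior_subset hs)))
  have hG₀ : G t₀ < 0 := inv_lt_zero.mpr (hneg t₀ le_rfl)
  have hs : t₀ ≤ t₀ + 1 - G t₀ := by linarith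
  have hGs : G (t₀ + 1 - G t₀) < 0 := inv_lt_zero.mpr (hneg _ hs)
  have hrise := hgrowth t₀ self_mem_Ici _ hs hs
  linarith

/-- For a > 0, there is no differentiable H : [0,∞) → ℝ with
H(0) < -a and H'(s) ≤ a² - H(s)² for all s ≥ 0. -/
theorem no_riccati_comparison_solution (a : ℝ) (ha : 0 < a) (H : ℝ → ℝ)
    (hdiff : ∀ s, 0 ≤ s → DifferentiableAt ℝ H s)
    (h0 : H 0 < -a)
    (hder : ∀ s, 0 ≤ s → deriv H s ≤ a ^ 2 - (H s) ^ 2) :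
    False := by
  have hbelow : ∀ s, 0 ≤ s → H s < -a :=
    lt_of_deriv_nonpos_of_lt hdiff h0 fun s hs hlt =>
      (hder s hs).trans (by nlinarith)
  exact false_of_riccati_of_lt ha.le hdiff hbelow hder
end

section
/- In ℝ³, the surfaces S_β parametrized by S_β(u,v) = (u³, u + β, v), β ∈ ℝ, have unit normal N(u,v) = (1, −3u², 0)/√(1+9u⁴) (up to sign), and their principal curvatures are κ₁ = 0 and κ₂ = 6u/(1+9u⁴)^{3/2}. In particular, the support function ν = ⟨(1,0,0), N⟩ is everywhere positive while the mean curvature changes sign (it vanishes exactly when u = 0), so the surfaces are not totally geodesic. -/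
/-!
Everything is a coordinate computation. Put `w = 1 + 9u⁴`: the vector `n = (1, -3u², 0)` is
orthogonal to `S_u` and `S_v` and `‖n‖² = ‖S_u‖² = w`, so `N = n / √w`. Then
`⟪S_uu, N⟫ = 6u / √w` and `κ₂ = 6u / (w √w) = 6u / w^{3/2}`, which vanishes only at `u = 0`,
while `⟪ξ, N⟫ = 1 / √w > 0`.
-/

open RealInnerProductSpace EuclideanSpace

theorem WithLp.hasDerivAt_toLp {𝕜 ι : Type*} [NontriviallyNormedField 𝕜] [Fintype ι]
    {E : ι → Type*} [∀ i, NormedAddCommGroup (E i)] [∀ i, NormedSpace 𝕜 (E i)]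
    (p : ENNReal) [Fact (1 ≤ p)] {f : 𝕜 → ∀ i, E i} {f' : ∀ i, E i} {x : 𝕜}
    (hf : HasDerivAt f f' x) :
    HasDerivAt (fun t => WithLp.toLp p (f t)) (WithLp.toLp p f') x :=
  (PiLp.hasStrictFDerivAt_toLp p (f x)).hasFDerivAt.comp_hasDerivAt x hf

theorem hasDerivAt_vec3 {𝕜 F : Type*} [NontriviallyNormedField 𝕜] [NormedAddCommGroup F]
    [NormedSpace 𝕜 F] {f g h : 𝕜 → F} {f' g' h' : F} {x : 𝕜} (hf : HasDerivAt f f' x)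
    (hg : HasDerivAt g g' x) (hh : HasDerivAt h h' x) :
    HasDerivAt (fun t => ![f t, g t, h t]) ![f', g', h'] x :=
  hasDerivAt_pi.2 <| Fin.forall_fin_succ.2 ⟨hf, Fin.forall_fin_succ.2 ⟨hg, Fin.forall_fin_one.2 hh⟩⟩

theorem EuclideanSpace.inner_toLp_vec3 (a b c d e f : ℝ) :
    ⟪WithLp.toLp 2 ![a, b, c], WithLp.toLp 2 ![d, e, f]⟫ = a * d + b * e + c * f := by
  simp [inner_toLp_toLp]
  ring

theorem Real.rpow_three_halves {x : ℝ} (hx : 0 ≤ x) : x ^ (3 / 2 : ℝ) = x * √x := by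
  rw [show (3 / 2 : ℝ) = 1 + 1 / 2 by norm_num, Real.rpow_add' hx (by norm_num), Real.rpow_one,
    Real.sqrt_eq_rpow]

/-- Example 4.3 of the paper, corrected: In ℝ³ the surfaces
S_β(u,v) = (u³, u+β, v) have tangent vectors S_u = (3u², 1, 0), S_v = (0,0,1),
unit normal N(u) = (1, −3u², 0)/√(1+9u⁴), and principal curvatures κ₁ = 0
(in the direction S_v, since S_vv = 0) and κ₂ = ⟨S_uu, N⟩/⟨S_u, S_u⟩
= 6u/(1+9u⁴)^{3/2}.  The support function ν = ⟨(1,0,0), N⟩ is everywhere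
positive, while κ₂ vanishes exactly at u = 0 (so the mean curvature changes
sign and the surfaces are not totally geodesic). -/
theorem example_surfaces_not_totally_geodesic
    (S : ℝ → ℝ × ℝ → EuclideanSpace ℝ (Fin 3))
    (hS : ∀ β u v, S β (u, v) = (WithLp.equiv 2 (Fin 3 → ℝ)).symm ![u ^ 3, u + β, v])
    (Su Suu N : ℝ → EuclideanSpace ℝ (Fin 3)) (Sv ξ : EuclideanSpace ℝ (Fin 3))
    (hSu : ∀ u, Su u = (WithLp.equiv 2 (Fin 3 → ℝ)).symm ![3 * u ^ 2, 1, 0])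
    (hSuu : ∀ u, Suu u = (WithLp.equiv 2 (Fin 3 → ℝ)).symm ![6 * u, 0, 0])
    (hSv : Sv = (WithLp.equiv 2 (Fin 3 → ℝ)).symm ![0, 0, 1])
    (hξ : ξ = (WithLp.equiv 2 (Fin 3 → ℝ)).symm ![1, 0, 0])
    (hN : ∀ u, N u = (Real.sqrt (1 + 9 * u ^ 4))⁻¹ •
      ((WithLp.equiv 2 (Fin 3 → ℝ)).symm ![1, -3 * u ^ 2, 0] : EuclideanSpace ℝ (Fin 3)))
    (κ₂ : ℝ → ℝ) (hκ₂ : ∀ u, κ₂ u = 6 * u / (1 + 9 * u ^ 4) ^ ((3 : ℝ) / 2)) :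
    -- S_u and S_v are indeed the partial derivatives of S_β
    (∀ β u v, HasDerivAt (fun t => S β (t, v)) (Su u) u) ∧
    (∀ β u v, HasDerivAt (fun t => S β (u, t)) Sv v) ∧
    (∀ u, HasDerivAt Su (Suu u) u) ∧
    -- N is a unit normal
    (∀ u, ‖N u‖ = 1 ∧ ⟪N u, Su u⟫ = 0 ∧ ⟪N u, Sv⟫ = 0) ∧
    -- principal curvatures: κ₁ = 0 and κ₂ = ⟨S_uu, N⟩/⟨S_u, S_u⟩
    (∀ u, ⟪(0 : EuclideanSpace ℝ (Fin 3)), N u⟫ = 0 ∧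
      ⟪Suu u, N u⟫ / ⟪Su u, Su u⟫ = κ₂ u) ∧
    -- support function everywhere positive
    (∀ u, 0 < ⟪ξ, N u⟫) ∧
    -- κ₂ vanishes exactly at u = 0; the surfaces are not totally geodesic
    (∀ u, κ₂ u = 0 ↔ u = 0) := by
  simp only [WithLp.equiv_symm_apply] at hS hSu hSuu hSv hξ hN
  have hw (u : ℝ) : 0 < 1 + 9 * u ^ 4 := by positivity
  have hnorm (u : ℝ) : ‖WithLp.toLp 2 ![1, -3 * u ^ 2, 0]‖ = √(1 + 9 * u ^ 4) := by
    rw [norm_eq_sqrt_real_inner, inner_toLp_vec3]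
    ring_nf
  refine ⟨fun β u v => ?_, fun β u v => ?_, fun u => ?_, fun u => ⟨?_, ?_, ?_⟩,
    fun u => ⟨inner_zero_left _, ?_⟩, fun u => ?_, fun u => ?_⟩
  · simpa only [hS, hSu] using WithLp.hasDerivAt_toLp 2 (hasDerivAt_vec3
      (by simpa using hasDerivAt_pow 3 u) ((hasDerivAt_id' u).add_const β) (hasDerivAt_const u v))
  · simpa only [hS, hSv] using WithLp.hasDerivAt_toLp 2 (hasDerivAt_vec3
      (hasDerivAt_const v (u ^ 3)) (hasDerivAt_const v (u + β)) (hasDerivAt_id' v))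
  · simpa only [funext hSu, hSuu] using WithLp.hasDerivAt_toLp 2 (hasDerivAt_vec3
      (((hasDerivAt_pow 2 u).const_mul 3).congr_deriv (by norm_num; ring))
      (hasDerivAt_const u 1) (hasDerivAt_const u 0))
  · rw [hN, ← hnorm]
    exact norm_smul_inv_norm fun h => by simpa using congrArg (· 0) h
  · rw [hN, hSu, real_inner_smul_left, inner_toLp_vec3]
    ring
  · rw [hN, hSv, real_inner_smul_left, inner_toLp_vec3]
    ring
  · rw [hN, hSuu, hSu, hκ₂, real_inner_smul_right, inner_toLp_vec3,
      inner_toLp_vec3, Real.rpow_three_halves (hw u).le]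
    field_simp
    ring
  · rw [hN, hξ, real_inner_smul_right, inner_toLp_vec3]
    simpa using hw u
  · rw [hκ₂, div_eq_zero_iff, or_iff_left (Real.rpow_pos_of_pos (hw u) _).ne']
    simp
end

section
/- Let ν₀ > 0 and suppose G < 0 (i.e., assume sup over the leaf of the divergence expression is negative). If H : ℝ → ℝ is differentiable with n·ν₀·H(s)² + n·H'(s) < 0 for all s (where n ≥ 1/ν₀ is a positive integer), then after choosing orientation so that H ≤ 0 on some ray (a,∞), one derives a contradiction; hence no such H exists with H(s) ≤ 0 for all s > a. Conclude: the invariant G_L^ξ := sup_L {div_L(A(ξ^⊤) − Hξ^⊤) + Ric(ξ^⊤, N)} is nonnegative. -/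
/-!
Since `H' < -c H² ≤ 0`, `H` is strictly decreasing, so `H ≤ 0` upgrades to `H < 0`.
Then `f = -1/H` is positive with `f' = H'/H² < -c`, so `f` decreases at least linearly
and becomes negative in finite time.
-/

open Set

theorem exists_neg_of_deriv_lt_neg {f : ℝ → ℝ} {a c : ℝ} (hc : 0 < c)
    (hf : ∀ s, a < s → DifferentiableAt ℝ f s) (hf' : ∀ s, a < s → deriv f s < -c) :
    ∃ t, a < t ∧ f t < 0 := by
  set s := a + 1
  set t := s + |f s| / c + 1
  have has : a < s := by linarith
  have hst : s < t := by linarith [show 0 ≤ |f s| / c by positivity]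
  have hslope : f t - f s < -c * (t - s) :=
    (convex_Ioi a).image_sub_lt_mul_sub_of_deriv_lt
      (fun x hx => (hf x hx).continuousAt.continuousWithinAt)
      (fun x hx => (hf x (by rwa [interior_Ioi] at hx)).differentiableWithinAt)
      (fun x hx => hf' x (by rwa [interior_Ioi] at hx)) s has t (has.trans hst) hst
  have hdist : c * (t - s) = |f s| + c := by
    rw [show t - s = |f s| / c + 1 by ring, mul_add, mul_div_cancel₀ _ hc.ne', mul_one]
  exact ⟨t, has.trans hst, by linarith [le_abs_self (f s)]⟩

theorem neg_of_deriv_neg_of_nonpos {H : ℝ → ℝ} {a : ℝ}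
    (hH : ∀ s, a < s → DifferentiableAt ℝ H s) (hH' : ∀ s, a < s → deriv H s < 0)
    (hnonpos : ∀ s, a < s → H s ≤ 0) {s : ℝ} (hs : a < s) : H s < 0 := by
  have hanti : StrictAntiOn H (Ioi a) :=
    strictAntiOn_of_deriv_neg (convex_Ioi a)
      (fun x hx => (hH x hx).continuousAt.continuousWithinAt)
      (fun x hx => hH' x (by rwa [interior_Ioi] at hx))
  have hmid : a < (a + s) / 2 := by linarith
  calc H s < H ((a + s) / 2) := hanti hmid hs (by linarith)
    _ ≤ 0 := hnonpos _ hmid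

theorem exists_pos_of_deriv_lt_neg_mul_sq {H : ℝ → ℝ} {a c : ℝ} (hc : 0 < c)
    (hH : ∀ s, a < s → DifferentiableAt ℝ H s) (hH' : ∀ s, a < s → deriv H s < -c * H s ^ 2) :
    ∃ s, a < s ∧ 0 < H s := by
  by_contra! hnonpos
  have hneg : ∀ s, a < s → H s < 0 := fun s hs =>
    neg_of_deriv_neg_of_nonpos hH
      (fun x hx => (hH' x hx).trans_le (by nlinarith [sq_nonneg (H x)])) hnonpos hs
  have hderiv : ∀ s, a < s → HasDerivAt (fun x => -(H x)⁻¹) (deriv H s / H s ^ 2) s := by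
    intro s hs
    simpa only [neg_div, neg_neg] using ((hH s hs).hasDerivAt.fun_inv (hneg s hs).ne).fun_neg
  obtain ⟨t, hat, ht⟩ := exists_neg_of_deriv_lt_neg hc
    (fun s hs => (hderiv s hs).differentiableAt)
    (fun s hs => by
      rw [(hderiv s hs).deriv, div_lt_iff₀ (sq_pos_of_neg (hneg s hs))]
      exact hH' s hs)
  have : (H t)⁻¹ < 0 := inv_lt_zero.mpr (hneg t hat)
  linarith

theorem no_strict_riccati_negative_solution_general (a ν₀ : ℝ) (hν₀ : 0 < ν₀)
    (n : ℕ) (H : ℝ → ℝ)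
    (hdiff : ∀ s, a < s → DifferentiableAt ℝ H s)
    (hineq : ∀ s, a < s → (n : ℝ) * ν₀ * (H s) ^ 2 + (n : ℝ) * deriv H s < 0)
    (hneg : ∀ s, a < s → H s ≤ 0) :
    False := by
  have hriccati : ∀ s, a < s → deriv H s < -ν₀ * H s ^ 2 := fun s hs => by
    have : (n : ℝ) * (ν₀ * H s ^ 2 + deriv H s) < 0 := by linarith [hineq s hs]
    linarith [neg_of_mul_neg_right this n.cast_nonneg]
  obtain ⟨s, hs, hpos⟩ := exists_pos_of_deriv_lt_neg_mul_sq hν₀ hdiff hriccati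
  exact (hneg s hs).not_gt hpos

/-- core of the nonnegativity of the invariant G_L^ξ in
Theorem C: there is no differentiable function H : (a,∞) → ℝ with
H(s) < 0 and H'(s) < -ν₀·H(s)² for all s > a, where ν₀ > 0.  Consequently,
along a complete integral curve of ξ^⊤ the mean curvature cannot satisfy
ν₀·H² + H' < 0 with H eventually negative, which forces
G_L^ξ = sup_L {div_L(A(ξ^⊤) − Hξ^⊤) + Ric(ξ^⊤, N)} ≥ 0. -/
theorem no_strict_riccati_negative_solution (a ν₀ : ℝ) (hν₀ : 0 < ν₀)
    (n : ℕ) (hn : (1 : ℝ) / ν₀ ≤ n) (H : ℝ → ℝ)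
    (hdiff : ∀ s, a < s → DifferentiableAt ℝ H s)
    (hineq : ∀ s, a < s → (n : ℝ) * ν₀ * (H s) ^ 2 + (n : ℝ) * deriv H s < 0)
    (hneg : ∀ s, a < s → H s ≤ 0) :
    False :=
  no_strict_riccati_negative_solution_general a ν₀ hν₀ n H hdiff hineq hneg
end

section
/- Let a ≥ 0 and H : [0,∞) → ℝ differentiable with H'(s) ≤ a² − H(s)² for all s ≥ 0. Then H(s) ≥ −a for all s ≥ 0. -/
/-- Riccati comparison, quantitative content of H_L² ≤ G_L^ξ:
if a ≥ 0 and H : [0,∞) → ℝ is differentiable with H'(s) ≤ a² − H(s)² for all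
s ≥ 0, then H(0) ≥ −a (indeed H(s) ≥ −a for all s ≥ 0). -/
theorem riccati_comparison_lower_bound (a : ℝ) (ha : 0 ≤ a) (H : ℝ → ℝ)
    (hdiff : ∀ s, 0 ≤ s → DifferentiableAt ℝ H s)
    (hder : ∀ s, 0 ≤ s → deriv H s ≤ a ^ 2 - (H s) ^ 2) :
    -a ≤ H 0 ∧ ∀ s, 0 ≤ s → -a ≤ H s := by
  have key : ∀ s₀, 0 ≤ s₀ → -a ≤ H s₀ := by
    intro s₀ hs₀
    by_contra hlt
    push_neg at hlt
    set c := H s₀ with hc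
    -- Step 1: H stays ≤ c for all t ≥ s₀
    have hstep : ∀ t, s₀ ≤ t → H t ≤ c := by
      intro t ht
      have hcont : ContinuousOn H (Set.Icc s₀ t) := fun x hx =>
        ((hdiff x (le_trans hs₀ hx.1)).continuousAt).continuousWithinAt
      have hd : ∀ x ∈ Set.Ico s₀ t, HasDerivWithinAt H (deriv H x) (Set.Ici x) x := fun x hx =>
        ((hdiff x (le_trans hs₀ hx.1)).hasDerivAt).hasDerivWithinAt
      have hB : ∀ x : ℝ, HasDerivAt (fun _ : ℝ => c) 0 x := fun x => hasDerivAt_const x c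
      have bound : ∀ x ∈ Set.Ico s₀ t, H x = (fun _ : ℝ => c) x → deriv H x < 0 := by
        intro x hx hxc
        have h1 : deriv H x ≤ a ^ 2 - (H x) ^ 2 := hder x (le_trans hs₀ hx.1)
        have h2 : H x = c := hxc
        nlinarith [hlt]
      have := image_le_of_deriv_right_lt_deriv_boundary (B := fun _ : ℝ => c) (B' := fun _ : ℝ => 0) hcont hd (le_refl c) hB bound
        (Set.right_mem_Icc.2 ht)
      exact this
    have hneg : ∀ t, s₀ ≤ t → H t + a < 0 := by
      intro t ht
      have := hstep t ht
      linarith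
    -- Step 2: φ t = -(H t + a)⁻¹ + t is antitone on [s₀, ∞)
    set φ : ℝ → ℝ := fun t => -(H t + a)⁻¹ + t with hφ
    have hderivφ : ∀ t, s₀ ≤ t → HasDerivAt φ (deriv H t / (H t + a) ^ 2 + 1) t := by
      intro t ht
      have hne : H t + a ≠ 0 := ne_of_lt (hneg t ht)
      have h1 : HasDerivAt (fun u => H u + a) (deriv H t) t :=
        ((hdiff t (le_trans hs₀ ht)).hasDerivAt).add_const a
      have h2 := (h1.inv hne).neg.add ((hasDerivAt_id t))
      convert h2 using 1
      · rfl
      · rfl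
      · rfl
      · ring
    have hφanti : AntitoneOn φ (Set.Ici s₀) := by
      apply antitoneOn_of_deriv_nonpos (convex_Ici s₀)
      · intro x hx
        exact ((hderivφ x hx).continuousAt).continuousWithinAt
      · intro x hx
        rw [interior_Ici] at hx
        exact (hderivφ x (le_of_lt hx)).differentiableAt.differentiableWithinAt
      · intro x hx
        rw [interior_Ici] at hx
        have hx' : s₀ ≤ x := le_of_lt hx
        rw [(hderivφ x hx').deriv]
        have hne : H x + a < 0 := hneg x hx'
        have hsq : (0:ℝ) < (H x + a) ^ 2 := by nlinarith [hne]
        have h3 : deriv H x + (H x + a) ^ 2 ≤ 0 := by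
          nlinarith [hder x (le_trans hs₀ hx')]
        have : deriv H x / (H x + a) ^ 2 + 1 = (deriv H x + (H x + a) ^ 2) / (H x + a) ^ 2 := by
          rw [div_add_one (ne_of_gt hsq)]
        rw [this]
        exact div_nonpos_of_nonpos_of_nonneg h3 (le_of_lt hsq)
    -- Step 3: contradiction at large time
    have hcneg : c + a < 0 := by linarith
    have hinvpos : 0 < -(c + a)⁻¹ := by
      have : (c + a)⁻¹ < 0 := inv_lt_zero.2 hcneg
      linarith
    have hT : (s₀ + -(c + a)⁻¹ + 1 : ℝ) = s₀ + -(c + a)⁻¹ + 1 := rfl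
    set T : ℝ := s₀ + -(c + a)⁻¹ + 1 with hTdef
    have hTge : s₀ ≤ T := by rw [hTdef]; linarith
    have hφT : φ T ≤ φ s₀ := hφanti (Set.self_mem_Ici) hTge hTge
    have hTpos : 0 < -(H T + a)⁻¹ := by
      have : (H T + a)⁻¹ < 0 := inv_lt_zero.2 (hneg T hTge)
      linarith
    have hφs₀ : φ s₀ = -(c + a)⁻¹ + s₀ := by simp [hφ, hc]
    have : T < -(c + a)⁻¹ + s₀ := by
      have := hφT
      rw [hφs₀] at this
      simp only [hφ] at this
      linarith
    linarith
  exact ⟨key 0 le_rfl, key⟩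
end
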